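/- Let (A, ∨, ⊙, ⊤, ⊥) be a commutative idempotent semiring whose induced lattice (with x ∧ y := x ⊙ y) is complete. Then the expansion with x ∧ y := x ⊙ y and x → y := ⋁{z | x ⊙ z ≤ y} is a Heyting algebra, i.e., an idempotent commutative bounded divisible residuated lattice. -/

import Mathlib

/-!
Distributivity of `mul x` over arbitrary joins makes it monotone, so with the unit `⊤` the
product lies below both factors, and idempotency gives `x ⊓ y = (x ⊓ y) * (x ⊓ y) ≤ x * y`:
the product is the meet. A join-preserving map on a complete lattice has the right adjoint
`y ↦ sSup {z | f z ≤ y}`, which gives residuation, and divisibility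
`x ⊓ y = x ⊓ (x → y)` holds for any right adjoint of `x ⊓ ·`.
-/

section SSupPreserving

variable {α β : Type*} [CompleteLattice α] [CompleteLattice β] {f : α → β}

theorem monotone_of_map_sSup (hf : ∀ S, f (sSup S) = sSup (f '' S)) : Monotone f :=
  OrderHomClass.mono (⟨f, hf⟩ : sSupHom α β)

theorem galoisConnection_sSup_of_map_sSup (hf : ∀ S, f (sSup S) = sSup (f '' S)) :
    GaloisConnection f fun y => sSup {z | f z ≤ y} := by
  intro z y
  refine ⟨fun h => le_sSup h, fun h => ?_⟩
  calc f z ≤ f (sSup {z | f z ≤ y}) := monotone_of_map_sSup hf h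
    _ = sSup (f '' {z | f z ≤ y}) := hf _
    _ ≤ y := sSup_le (Set.forall_mem_image.2 fun _ hw => hw)

end SSupPreserving

theorem mul_eq_inf_of_monotone {α : Type*} [Lattice α] [OrderTop α] {mul : α → α → α}
    (hmono : ∀ x, Monotone (mul x)) (hmc : ∀ x y, mul x y = mul y x)
    (hmi : ∀ x, mul x x = x) (hmt : ∀ x, mul x ⊤ = x) (x y : α) : mul x y = x ⊓ y := by
  have mul_le_left : ∀ a b, mul a b ≤ a := fun a b => (hmono a le_top).trans_eq (hmt a)
  refine le_antisymm (le_inf (mul_le_left x y) (hmc x y ▸ mul_le_left y x)) ?_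
  calc x ⊓ y = mul (x ⊓ y) (x ⊓ y) := (hmi _).symm
    _ ≤ mul (x ⊓ y) y := hmono _ inf_le_right
    _ = mul y (x ⊓ y) := hmc _ _
    _ ≤ mul y x := hmono y inf_le_left
    _ = mul x y := hmc y x

theorem inf_eq_inf_of_galoisConnection {α : Type*} [Lattice α] {x : α} {u : α → α}
    (gc : GaloisConnection (x ⊓ ·) u) (y : α) : x ⊓ y = x ⊓ u y :=
  le_antisymm (inf_le_inf_left x (gc.le_u inf_le_right)) (le_inf inf_le_left (gc.l_u_le y))

theorem stmt9_general
    {A : Type*} [CompleteLattice A]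
    (mul : A → A → A)
    (hmc : ∀ x y : A, mul x y = mul y x)
    (hmi : ∀ x : A, mul x x = x)
    (hmt : ∀ x : A, mul x ⊤ = x)
    (hdist : ∀ (x : A) (S : Set A), mul x (sSup S) = sSup ((fun s => mul x s) '' S)) :
    -- the expansion with meet := mul and imp x y := sSup {z | mul x z ≤ y}
    -- is a Heyting algebra (idempotent DRL)
    (∀ x y : A, mul x y = x ⊓ y) ∧
    (∀ x y z : A, mul x z ≤ y ↔ z ≤ sSup {z : A | mul x z ≤ y}) ∧
    (∀ x y : A, mul x y = mul x (sSup {z : A | mul x z ≤ y})) ∧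
    (∀ x : A, mul x x = x) := by
  have hinf := mul_eq_inf_of_monotone (fun x => monotone_of_map_sSup (hdist x)) hmc hmi hmt
  have hgc x := galoisConnection_sSup_of_map_sSup (hdist x)
  refine ⟨hinf, fun x y z => hgc x z y, fun x y => ?_, hmi⟩
  have hgcx := hgc x
  rw [show mul x = (x ⊓ ·) from funext (hinf x)] at hgcx ⊢
  exact inf_eq_inf_of_galoisConnection hgcx y

theorem stmt9
    {A : Type*} [CompleteLattice A]
    (mul : A → A → A)
    (hmc : ∀ x y : A, mul x y = mul y x)
    (hma : ∀ x y z : A, mul (mul x y) z = mul x (mul y z))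
    (hmi : ∀ x : A, mul x x = x)
    (hmt : ∀ x : A, mul x ⊤ = x)
    (hmb : ∀ x : A, mul x ⊥ = ⊥)
    (hdist : ∀ (x : A) (S : Set A), mul x (sSup S) = sSup ((fun s => mul x s) '' S)) :
    -- the expansion with meet := mul and imp x y := sSup {z | mul x z ≤ y}
    -- is a Heyting algebra (idempotent DRL)
    (∀ x y : A, mul x y = x ⊓ y) ∧
    (∀ x y z : A, mul x z ≤ y ↔ z ≤ sSup {z : A | mul x z ≤ y}) ∧
    (∀ x y : A, mul x y = mul x (sSup {z : A | mul x z ≤ y})) ∧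
    (∀ x : A, mul x x = x) :=
  stmt9_general mul hmc hmi hmt hdist
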